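/- arXiv:1309.2781 — 2 statements merged into one kernel-verified Lean document; each statement's English description precedes it below -/
import Mathlib

section
/- Let (Ω, F, P) be a probability space, d ≥ 1, α ∈ ℕ^d a multiindex of order m = |α| ≥ 1, and 1 < p < ∞. Let X_n, X : Ω → ℝ^d be random vectors with X_n → X almost surely, and let G : Ω → ℝ be a bounded random variable. Suppose that for each n there is a random variable L_n ∈ L^p(Ω) with sup_n ‖L_n‖_{L^p} < ∞ such that the integration by parts identity E[∂_α g(X_n) G] = E[g(X_n) L_n] holds for every g ∈ C^m_b(ℝ^d). Then there exists H ∈ L^p(Ω) such that E[∂_α g(X) G] = E[g(X) H] for every g ∈ C^m_b(ℝ^d). -/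
/-!
Since `(Lₙ)` is bounded in `Lᵖ` with `1 < p < ∞`, it has a weak limit `H ∈ Lᵖ` along an
ultrafilter finer than `atTop`: the limits of `A ↦ ∫_A Lₙ^±` are additive and dominated by
`C μ(A)^(1/q)`, hence measures absolutely continuous with respect to `μ`; `H` is the difference of
their Radon–Nikodym densities, and a converse Hölder inequality puts it in `Lᵖ`.
For `g ∈ C^m_b`, `∂_α g` is bounded and continuous, so `E[∂_α g(Xₙ) G] → E[∂_α g(X) G]` by
dominated convergence, while `E[g(Xₙ) Lₙ] - E[g(X) Lₙ] → 0` by Hölder since `g(Xₙ) → g(X)` in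
`L^q`. Thus `E[g(X) Lₙ] = E[∂_α g(Xₙ) G] - (E[g(Xₙ) Lₙ] - E[g(X) Lₙ]) → E[∂_α g(X) G]`, and this
limit is the weak limit `E[g(X) H]`.
-/

open MeasureTheory Filter Topology

/-- Iterated partial derivative in direction `i`, applied `n` times. -/
noncomputable def pderivN {d : ℕ} (i : Fin d) :
    ℕ → (EuclideanSpace ℝ (Fin d) → ℝ) → EuclideanSpace ℝ (Fin d) → ℝ
  | 0, f => f
  | n + 1, f => fun x => fderiv ℝ (pderivN i n f) x (EuclideanSpace.single i 1)

/-- The iterated partial derivative `∂_α` associated to a multiindex `α ∈ ℕ^d`: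
for each coordinate `i`, we differentiate `α i` times in direction `i`. -/
noncomputable def mderiv {d : ℕ} (α : Fin d → ℕ)
    (f : EuclideanSpace ℝ (Fin d) → ℝ) : EuclideanSpace ℝ (Fin d) → ℝ :=
  (List.finRange d).foldr (fun i g => pderivN i (α i) g) f

/-- `g` belongs to `C^m_b(ℝ^d)`: it is `m`-times continuously differentiable and
bounded together with all its derivatives of order `≤ m`. -/
def CmBounded {d : ℕ} (m : ℕ) (g : EuclideanSpace ℝ (Fin d) → ℝ) : Prop :=
  ContDiff ℝ (m : ℕ∞) g ∧ ∀ k : ℕ, k ≤ m → ∃ B : ℝ, ∀ x, ‖iteratedFDeriv ℝ k g x‖ ≤ B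

open scoped ENNReal NNReal

namespace CmBounded

variable {d m : ℕ} {g : EuclideanSpace ℝ (Fin d) → ℝ}

theorem continuous (hg : CmBounded m g) : Continuous g :=
  hg.1.continuous

theorem exists_abs_le (hg : CmBounded m g) : ∃ B, ∀ x, |g x| ≤ B := by
  obtain ⟨B, hB⟩ := hg.2 0 m.zero_le
  exact ⟨B, fun x => by simpa using hB x⟩

theorem fderiv_apply (hg : CmBounded (m + 1) g) (v : EuclideanSpace ℝ (Fin d)) :
    CmBounded m (fun x => fderiv ℝ g x v) := by
  have hg' : ContDiff ℝ m (fderiv ℝ g) := hg.1.fderiv_right (by norm_cast)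
  refine ⟨hg'.clm_apply contDiff_const, fun k hk => ?_⟩
  obtain ⟨B, hB⟩ := hg.2 (k + 1) (by omega)
  refine ⟨‖v‖ * B, fun x => ?_⟩
  calc ‖iteratedFDeriv ℝ k (fun y => fderiv ℝ g y v) x‖
      ≤ ‖v‖ * ‖iteratedFDeriv ℝ k (fderiv ℝ g) x‖ :=
        norm_iteratedFDeriv_clm_apply_const hg'.contDiffAt (by exact_mod_cast hk)
    _ = ‖v‖ * ‖iteratedFDeriv ℝ (k + 1) g x‖ := by rw [norm_iteratedFDeriv_fderiv]
    _ ≤ ‖v‖ * B := by gcongr; exact hB x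

theorem pderivN (i : Fin d) (n : ℕ) (hg : CmBounded (n + m) g) :
    CmBounded m (pderivN i n g) := by
  induction n generalizing m with
  | zero => simpa [_root_.pderivN] using hg
  | succ n ih =>
    exact (ih (m := m + 1) (by rwa [← add_assoc, add_right_comm])).fderiv_apply _

theorem foldr_pderivN (α : Fin d → ℕ) (l : List (Fin d))
    (hg : CmBounded ((l.map α).sum + m) g) :
    CmBounded m (l.foldr (fun i h => _root_.pderivN i (α i) h) g) := by
  induction l generalizing m with
  | nil => simpa using hg
  | cons i l ih =>
    refine (ih (m := α i + m) ?_).pderivN i (α i)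
    simpa [add_assoc, add_left_comm] using hg

theorem mderiv (α : Fin d → ℕ) (hg : CmBounded (∑ i, α i + m) g) :
    CmBounded m (_root_.mderiv α g) :=
  foldr_pderivN α _ (by rwa [Fin.sum_univ_def] at hg)

end CmBounded

section Holder

variable {Ω : Type*} [MeasurableSpace Ω] {μ : Measure Ω}

theorem MeasureTheory.Integrable.mul_of_abs_le {K f : Ω → ℝ} (hK : Integrable K μ)
    (hf : AEStronglyMeasurable f μ) {M : ℝ} (hM : ∀ ω, |f ω| ≤ M) :
    Integrable (fun ω => f ω * K ω) μ :=
  hK.bdd_mul hf (.of_forall hM)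

theorem MeasureTheory.MemLp.eLpNorm_eq_integral_rpow_of_nonneg {f : Ω → ℝ} {r : ℝ} (hr : 0 < r)
    (hf0 : 0 ≤ f) (hf : MemLp f (.ofReal r) μ) :
    eLpNorm f (.ofReal r) μ = .ofReal ((∫ ω, f ω ^ r ∂μ) ^ r⁻¹) := by
  rw [hf.eLpNorm_eq_integral_rpow_norm (by simpa using hr) ENNReal.ofReal_ne_top,
    ENNReal.toReal_ofReal hr.le]
  simp_rw [Real.norm_of_nonneg (hf0 _)]

theorem enorm_integral_mul_le {p q : ℝ} (hpq : p.HolderConjugate q) {f K : Ω → ℝ}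
    (hf : AEStronglyMeasurable f μ) (hK : AEStronglyMeasurable K μ) :
    ‖∫ ω, f ω * K ω ∂μ‖ₑ ≤ eLpNorm f (.ofReal q) μ * eLpNorm K (.ofReal p) μ := by
  have := hpq.symm.ennrealOfReal
  calc ‖∫ ω, f ω * K ω ∂μ‖ₑ ≤ ∫⁻ ω, ‖f ω * K ω‖ₑ ∂μ := enorm_integral_le_lintegral_enorm _
    _ = eLpNorm (f • K) 1 μ := eLpNorm_one_eq_lintegral_enorm.symm
    _ ≤ _ := eLpNorm_smul_le_mul_eLpNorm hK hf

theorem integral_mul_le_of_eLpNorm_le {p q : ℝ} (hpq : p.HolderConjugate q) {f K : Ω → ℝ}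
    (hf : MemLp f (.ofReal q) μ) (hK : AEStronglyMeasurable K μ) {C : ℝ≥0}
    (hKC : eLpNorm K (.ofReal p) μ ≤ C) :
    ∫ ω, f ω * K ω ∂μ ≤ C * (eLpNorm f (.ofReal q) μ).toReal := by
  have hf_ne_top := hf.eLpNorm_ne_top
  calc ∫ ω, f ω * K ω ∂μ ≤ ‖∫ ω, f ω * K ω ∂μ‖ₑ.toReal := le_abs_self _
    _ ≤ (eLpNorm f (.ofReal q) μ * C).toReal :=
        ENNReal.toReal_mono (by finiteness) ((enorm_integral_mul_le hpq hf.1 hK).trans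
          (by gcongr))
    _ = C * (eLpNorm f (.ofReal q) μ).toReal := by simp [mul_comm]

theorem setLIntegral_enorm_le_eLpNorm_mul {r : ℝ≥0∞} (hr : 1 ≤ r) {K : Ω → ℝ}
    (hK : AEStronglyMeasurable K μ) (A : Set Ω) :
    ∫⁻ ω in A, ‖K ω‖ₑ ∂μ ≤ eLpNorm K r μ * μ A ^ (1 - r.toReal⁻¹) := by
  rw [← eLpNorm_one_eq_lintegral_enorm]
  simpa only [ENNReal.toReal_one, div_one, one_div, Measure.restrict_apply_univ] using
    (eLpNorm_le_eLpNorm_mul_rpow_measure_univ hr hK.restrict).trans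
      (mul_le_mul_left (eLpNorm_mono_measure _ Measure.restrict_le_self) _)

theorem tendsto_eLpNorm_zero_of_tendsto_ae [IsFiniteMeasure μ] {r : ℝ≥0∞} (hr : 1 ≤ r)
    (hr' : r ≠ ∞) {f : ℕ → Ω → ℝ} (hf : ∀ n, AEStronglyMeasurable (f n) μ) {M : ℝ}
    (hM : ∀ n ω, |f n ω| ≤ M) (hlim : ∀ᵐ ω ∂μ, Tendsto (fun n => f n ω) atTop (𝓝 0)) :
    Tendsto (fun n => eLpNorm (f n) r μ) atTop (𝓝 0) := by
  have hui : UnifIntegrable f r μ := by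
    refine unifIntegrable_of hr hr' hf fun ε hε => ⟨M.toNNReal + 1, fun n => ?_⟩
    have hempty : {ω | M.toNNReal + 1 ≤ ‖f n ω‖₊} = ∅ := by
      ext ω
      simp only [Set.mem_ofPred_eq, Set.mem_empty_iff_false, iff_false, not_le]
      rw [← NNReal.coe_lt_coe, coe_nnnorm, Real.norm_eq_abs, NNReal.coe_add,
        Real.coe_toNNReal', NNReal.coe_one]
      linarith [hM n ω, le_max_left M 0]
    simp [hempty]
  simpa using tendsto_Lp_finite_of_tendsto_ae hr hr' hf MemLp.zero hui hlim

theorem tendsto_integral_mul_zero_of_tendsto_ae [IsFiniteMeasure μ] {p q : ℝ}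
    (hpq : p.HolderConjugate q) {f K : ℕ → Ω → ℝ} (hf : ∀ n, AEStronglyMeasurable (f n) μ)
    {M : ℝ} (hM : ∀ n ω, |f n ω| ≤ M) (hlim : ∀ᵐ ω ∂μ, Tendsto (fun n => f n ω) atTop (𝓝 0))
    (hK : ∀ n, AEStronglyMeasurable (K n) μ) {C : ℝ≥0∞} (hC : C ≠ ∞)
    (hKC : ∀ n, eLpNorm (K n) (.ofReal p) μ ≤ C) :
    Tendsto (fun n => ∫ ω, f n ω * K n ω ∂μ) atTop (𝓝 0) := by
  have hf0 : Tendsto (fun n => eLpNorm (f n) (.ofReal q) μ * C) atTop (𝓝 0) := by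
    simpa using ENNReal.Tendsto.mul_const (tendsto_eLpNorm_zero_of_tendsto_ae
      (by simpa using hpq.symm.lt.le) ENNReal.ofReal_ne_top hf hM hlim) (Or.inr hC)
  refine tendsto_zero_iff_enorm_tendsto_zero.2 <|
    tendsto_of_tendsto_of_tendsto_of_le_of_le tendsto_const_nhds hf0 (fun _ => zero_le) fun n => ?_
  exact (enorm_integral_mul_le hpq (hf n) (hK n)).trans (by gcongr; exact hKC n)

theorem Real.HolderConjugate.rpow_inv_le_of_le_mul_rpow_inv {p q J C : ℝ}
    (hpq : p.HolderConjugate q) (hJ : 0 ≤ J) (hC : 0 ≤ C) (h : J ≤ C * J ^ q⁻¹) :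
    J ^ p⁻¹ ≤ C := by
  rcases hJ.eq_or_lt with rfl | hJ
  · rwa [Real.zero_rpow (inv_ne_zero hpq.ne_zero)]
  refine le_of_mul_le_mul_left ?_ (Real.rpow_pos_of_pos hJ q⁻¹)
  rwa [← Real.rpow_add hJ, add_comm, hpq.inv_add_inv_eq_one, Real.rpow_one, mul_comm]

/-- `J = ∫ g^p` satisfies `J ≤ ∫ g^(p-1) W ≤ C ‖g^(p-1)‖_q = C J^(1/q)`. -/
theorem eLpNorm_le_of_integral_rpow_mul_le [IsFiniteMeasure μ] {p q : ℝ}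
    (hpq : p.HolderConjugate q) {g W : Ω → ℝ} (hg : Measurable g) (hg0 : 0 ≤ g) {M : ℝ}
    (hgM : ∀ ω, g ω ≤ M) (hgW : g ≤ W) (hWint : Integrable W μ) {C : ℝ≥0}
    (h : ∫ ω, g ω ^ (p - 1) * W ω ∂μ ≤
      C * (eLpNorm (fun ω => g ω ^ (p - 1)) (.ofReal q) μ).toReal) :
    eLpNorm g (.ofReal p) μ ≤ C := by
  have hp := hpq.pos
  have hpow_abs {s : ℝ} (hs : 0 ≤ s) (ω : Ω) : |g ω ^ s| ≤ M ^ s := by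
    rw [abs_of_nonneg (Real.rpow_nonneg (hg0 ω) _)]
    exact Real.rpow_le_rpow (hg0 ω) (hgM ω) hs
  have hf0 : 0 ≤ fun ω => g ω ^ (p - 1) := fun ω => Real.rpow_nonneg (hg0 ω) _
  set J := ∫ ω, g ω ^ p ∂μ
  have hJ0 : 0 ≤ J := integral_nonneg fun ω => Real.rpow_nonneg (hg0 ω) _
  have hfq : eLpNorm (fun ω => g ω ^ (p - 1)) (.ofReal q) μ = .ofReal (J ^ q⁻¹) := by
    rw [MemLp.eLpNorm_eq_integral_rpow_of_nonneg hpq.symm.pos hf0 (.of_bound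
      (hg.pow_const _).aestronglyMeasurable _ (.of_forall (hpow_abs hpq.sub_one_pos.le)))]
    simp_rw [← Real.rpow_mul (hg0 _), hpq.sub_one_mul_conj]
    rfl
  have hJ : J ≤ C * J ^ q⁻¹ := by
    calc J ≤ ∫ ω, g ω ^ (p - 1) * W ω ∂μ := by
          refine integral_mono (.of_bound (hg.pow_const p).aestronglyMeasurable _
            (.of_forall (hpow_abs hp.le))) (hWint.mul_of_abs_le
            (hg.pow_const _).aestronglyMeasurable (hpow_abs hpq.sub_one_pos.le)) fun ω => ?_
          calc g ω ^ p = g ω ^ (p - 1) * g ω := by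
                rw [← Real.rpow_add_one' (hg0 ω) (by linarith), sub_add_cancel]
            _ ≤ g ω ^ (p - 1) * W ω := mul_le_mul_of_nonneg_left (hgW ω) (hf0 ω)
      _ ≤ C * J ^ q⁻¹ := by rwa [hfq, ENNReal.toReal_ofReal (Real.rpow_nonneg hJ0 _)] at h
  rw [MemLp.eLpNorm_eq_integral_rpow_of_nonneg hp hg0 (.of_bound hg.aestronglyMeasurable _
    (.of_forall fun ω => (abs_of_nonneg (hg0 ω)).trans_le (hgM ω))), ← ENNReal.ofReal_coe_nnreal]
  exact ENNReal.ofReal_le_ofReal (hpq.rpow_inv_le_of_le_mul_rpow_inv hJ0 C.2 hJ)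

theorem eLpNorm_le_of_integral_mul_le [IsFiniteMeasure μ] {p q : ℝ} (hpq : p.HolderConjugate q)
    {W : Ω → ℝ} (hW : Measurable W) (hW0 : 0 ≤ W) (hWint : Integrable W μ) {C : ℝ≥0}
    (h : ∀ f : Ω → ℝ, Measurable f → (∃ M, ∀ ω, |f ω| ≤ M) →
      ∫ ω, f ω * W ω ∂μ ≤ C * (eLpNorm f (.ofReal q) μ).toReal) :
    eLpNorm W (.ofReal p) μ ≤ C := by
  have hmin (j : ℕ) : Measurable fun ω => min (W ω) j := hW.min measurable_const
  refine Lp.eLpNorm_le_of_ae_tendsto (u := atTop) (.of_forall fun j => ?_)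
    (fun j => (hmin j).aestronglyMeasurable) (.of_forall fun ω => tendsto_const_nhds.congr' ?_)
  · have hmin0 : 0 ≤ fun ω => min (W ω) j := fun ω => le_min (hW0 ω) j.cast_nonneg
    refine eLpNorm_le_of_integral_rpow_mul_le hpq (hmin j) hmin0 (fun ω => min_le_right _ _)
      (fun ω => min_le_left _ _) hWint (h _ ((hmin j).pow_const _) ⟨(j : ℝ) ^ (p - 1), fun ω => ?_⟩)
    rw [abs_of_nonneg (Real.rpow_nonneg (hmin0 ω) _)]
    exact Real.rpow_le_rpow (hmin0 ω) (min_le_right _ _) hpq.sub_one_pos.le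
  · filter_upwards [eventually_ge_atTop ⌈W ω⌉₊] with j hj
    exact (min_eq_left ((Nat.le_ceil _).trans (by exact_mod_cast hj))).symm

end Holder

section Measure

variable {Ω : Type*} [MeasurableSpace Ω] {μ : Measure Ω}

theorem isSetRing_measurableSet : IsSetRing {A : Set Ω | MeasurableSet A} :=
  ⟨.empty, fun _ _ => .union, fun _ _ => .diff⟩

/-- The domination `ν₀ A ≤ C μ(A)^s` makes the additive content `ν₀` continuous at `∅`, hence
countably additive. -/
theorem exists_measure_of_additive_of_le_rpow [IsFiniteMeasure μ] (ν₀ : Set Ω → ℝ≥0∞)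
    (hadd : ∀ A B, MeasurableSet A → MeasurableSet B → Disjoint A B → ν₀ (A ∪ B) = ν₀ A + ν₀ B)
    {C : ℝ≥0∞} (hC : C ≠ ∞) {s : ℝ} (hs : 0 < s) (hle : ∀ A, ν₀ A ≤ C * μ A ^ s) :
    ∃ ν : Measure Ω, IsFiniteMeasure ν ∧ ν ≪ μ ∧ ∀ A, MeasurableSet A → ν A = ν₀ A := by
  have hnull {A : Set Ω} (hA : μ A = 0) : ν₀ A = 0 := by
    simpa [hA, ENNReal.zero_rpow_of_pos hs] using hle A
  have hne_top (A : Set Ω) : ν₀ A ≠ ∞ := ((hle A).trans_lt (ENNReal.mul_lt_top hC.lt_top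
    (ENNReal.rpow_lt_top_of_nonneg hs.le (measure_ne_top μ A)))).ne
  have htendsto {A : ℕ → Set Ω} (hA : ∀ n, MeasurableSet (A n)) (hanti : Antitone A)
      (hempty : ⋂ n, A n = ∅) : Tendsto (fun n => ν₀ (A n)) atTop (𝓝 0) := by
    have hμ : Tendsto (fun n => μ (A n)) atTop (𝓝 0) := by
      simpa [hempty, Function.comp_def] using tendsto_measure_iInter_atTop
        (fun n => (hA n).nullMeasurableSet) hanti ⟨0, measure_ne_top μ _⟩
    have hbound : Tendsto (fun n => C * μ (A n) ^ s) atTop (𝓝 0) := by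
      simpa [ENNReal.zero_rpow_of_pos hs] using
        ENNReal.Tendsto.const_mul (hμ.ennrpow_const s) (Or.inr hC)
    exact tendsto_of_tendsto_of_tendsto_of_le_of_le tendsto_const_nhds hbound
      (fun _ => zero_le) fun n => hle (A n)
  let m := isSetRing_measurableSet.addContent_of_union ν₀ (hnull measure_empty)
    fun hA hB hAB => hadd _ _ hA hB hAB
  let ν : Measure Ω := Measure.ofMeasurable (fun A _ => ν₀ A) (hnull measure_empty)
    fun A hA hdisj => addContent_iUnion_eq_sum_of_tendsto_zero isSetRing_measurableSet m
      (fun A _ => hne_top A) (fun _ hA hanti hempty => htendsto hA hanti hempty)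
      hA (.iUnion hA) hdisj
  have hν (A : Set Ω) (hA : MeasurableSet A) : ν A = ν₀ A := Measure.ofMeasurable_apply A hA
  refine ⟨ν, ⟨(hν _ .univ).trans_lt (hne_top _).lt_top⟩, .mk fun A hA hμA => ?_, hν⟩
  rw [hν A hA, hnull hμA]

theorem exists_measure_tendsto_setLIntegral_enorm [IsFiniteMeasure μ] {ι : Type*}
    (U : Ultrafilter ι) {r : ℝ≥0∞} (hr : 1 < r) (hr' : r ≠ ∞) {K : ι → Ω → ℝ}
    (hK : ∀ i, AEStronglyMeasurable (K i) μ) {C : ℝ≥0∞} (hC : C ≠ ∞)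
    (hKC : ∀ i, eLpNorm (K i) r μ ≤ C) :
    ∃ ν : Measure Ω, IsFiniteMeasure ν ∧ ν ≪ μ ∧ ∀ A, MeasurableSet A →
      Tendsto (fun i => ∫⁻ ω in A, ‖K i ω‖ₑ ∂μ) U (𝓝 (ν A)) := by
  set ν₀ : Set Ω → ℝ≥0∞ := fun A => (U.map fun i => ∫⁻ ω in A, ‖K i ω‖ₑ ∂μ).lim
  have hν₀ (A : Set Ω) : Tendsto (fun i => ∫⁻ ω in A, ‖K i ω‖ₑ ∂μ) U (𝓝 (ν₀ A)) :=
    Ultrafilter.le_nhds_lim _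
  have hs : 0 < 1 - r.toReal⁻¹ := by
    have : 1 < r.toReal := by simpa using (ENNReal.toReal_lt_toReal ENNReal.one_ne_top hr').2 hr
    simpa using inv_lt_one_of_one_lt₀ this
  obtain ⟨ν, hνfin, hνμ, hν⟩ := exists_measure_of_additive_of_le_rpow ν₀
    (fun A B _ hB hAB => tendsto_nhds_unique (hν₀ (A ∪ B)) <| by
      simpa only [lintegral_union hB hAB] using (hν₀ A).add (hν₀ B))
    hC hs fun A => le_of_tendsto' (hν₀ A) fun i =>
      (setLIntegral_enorm_le_eLpNorm_mul hr.le (hK i) A).trans (by gcongr; exact hKC i)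
  exact ⟨ν, hνfin, hνμ, fun A hA => hν A hA ▸ hν₀ A⟩

end Measure

section WeakLimit

variable {Ω ι : Type*} [MeasurableSpace Ω] {μ : Measure Ω}

def TendstoWeakly (μ : Measure Ω) (K : ι → Ω → ℝ) (l : Filter ι) (H : Ω → ℝ) : Prop :=
  ∀ f : Ω → ℝ, Measurable f → (∃ M, ∀ ω, |f ω| ≤ M) →
    Tendsto (fun i => ∫ ω, f ω * K i ω ∂μ) l (𝓝 (∫ ω, f ω * H ω ∂μ))

theorem TendstoWeakly.sub {l : Filter ι} {K₁ K₂ : ι → Ω → ℝ} {H₁ H₂ : Ω → ℝ}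
    (h₁ : TendstoWeakly μ K₁ l H₁) (h₂ : TendstoWeakly μ K₂ l H₂)
    (hK₁ : ∀ i, Integrable (K₁ i) μ) (hK₂ : ∀ i, Integrable (K₂ i) μ)
    (hH₁ : Integrable H₁ μ) (hH₂ : Integrable H₂ μ) :
    TendstoWeakly μ (fun i => K₁ i - K₂ i) l (H₁ - H₂) := by
  rintro f hf ⟨M, hM⟩
  have hsub {F₁ F₂ : Ω → ℝ} (hF₁ : Integrable F₁ μ) (hF₂ : Integrable F₂ μ) :
      ∫ ω, f ω * (F₁ - F₂) ω ∂μ = ∫ ω, f ω * F₁ ω ∂μ - ∫ ω, f ω * F₂ ω ∂μ := by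
    rw [← integral_sub (hF₁.mul_of_abs_le hf.aestronglyMeasurable hM)
      (hF₂.mul_of_abs_le hf.aestronglyMeasurable hM)]
    simp_rw [Pi.sub_apply, mul_sub]
  simp_rw [hsub (hK₁ _) (hK₂ _), hsub hH₁ hH₂]
  exact (h₁ f hf ⟨M, hM⟩).sub (h₂ f hf ⟨M, hM⟩)

theorem tendsto_integral_simpleFunc_mul {l : Filter ι} {K : ι → Ω → ℝ} {H : Ω → ℝ}
    (hK : ∀ i, Integrable (K i) μ) (hH : Integrable H μ)
    (hset : ∀ A, MeasurableSet A →
      Tendsto (fun i => ∫ ω in A, K i ω ∂μ) l (𝓝 (∫ ω in A, H ω ∂μ)))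
    (φ : SimpleFunc Ω ℝ) :
    Tendsto (fun i => ∫ ω, φ ω * K i ω ∂μ) l (𝓝 (∫ ω, φ ω * H ω ∂μ)) := by
  induction φ using SimpleFunc.induction with
  | @const c A hA =>
    have (F : Ω → ℝ) : ∫ ω, (SimpleFunc.piecewise A hA (.const Ω c) (.const Ω 0)) ω * F ω ∂μ =
        c * ∫ ω in A, F ω ∂μ := by
      rw [← integral_const_mul, ← integral_indicator hA]
      congr 1 with ω
      by_cases hω : ω ∈ A <;> simp [hω]
    simp_rw [this]
    exact (hset A hA).const_mul c
  | @add φ ψ _ hφ hψ =>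
    obtain ⟨Mφ, hMφ⟩ := φ.exists_forall_norm_le
    obtain ⟨Mψ, hMψ⟩ := ψ.exists_forall_norm_le
    have (F : Ω → ℝ) (hF : Integrable F μ) :
        ∫ ω, (φ + ψ) ω * F ω ∂μ = ∫ ω, φ ω * F ω ∂μ + ∫ ω, ψ ω * F ω ∂μ := by
      rw [← integral_add (hF.mul_of_abs_le φ.aestronglyMeasurable hMφ)
        (hF.mul_of_abs_le ψ.aestronglyMeasurable hMψ)]
      simp_rw [SimpleFunc.coe_add, Pi.add_apply, add_mul]
    simp_rw [this _ (hK _), this _ hH]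
    exact hφ.add hψ

/-- A bounded measurable `f` is the pointwise limit of uniformly bounded simple functions `φₖ`,
and by Hölder `∫ φₖ Kᵢ → ∫ f Kᵢ` uniformly in `i`. -/
theorem tendstoWeakly_of_simpleFunc [IsFiniteMeasure μ] {p q : ℝ} (hpq : p.HolderConjugate q)
    {l : Filter ι} {K : ι → Ω → ℝ} (hK : ∀ i, MemLp (K i) (.ofReal p) μ) {C : ℝ≥0∞}
    (hC : C ≠ ∞) (hKC : ∀ i, eLpNorm (K i) (.ofReal p) μ ≤ C) {H : Ω → ℝ} (hH : Integrable H μ)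
    (hsimple : ∀ φ : SimpleFunc Ω ℝ,
      Tendsto (fun i => ∫ ω, φ ω * K i ω ∂μ) l (𝓝 (∫ ω, φ ω * H ω ∂μ))) :
    TendstoWeakly μ K l H := by
  rintro f hf ⟨M, hM⟩
  have hKint (i : ι) : Integrable (K i) μ := (hK i).integrable (by simpa using hpq.lt.le)
  set φ : ℕ → SimpleFunc Ω ℝ := SimpleFunc.approxOn f hf Set.univ 0 (Set.mem_univ 0)
  have hφf (ω : Ω) : Tendsto (fun k => φ k ω) atTop (𝓝 (f ω)) :=
    SimpleFunc.tendsto_approxOn hf (Set.mem_univ 0) (by simp)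
  have hφM (k : ℕ) (ω : Ω) : |φ k ω| ≤ 2 * M := by
    have := SimpleFunc.norm_approxOn_zero_le hf (Set.mem_univ 0) ω k
    simp only [Real.norm_eq_abs] at this
    linarith [hM ω]
  have hφ_sub : Tendsto (fun k => eLpNorm (⇑(φ k) - f) (.ofReal q) μ * C) atTop (𝓝 0) := by
    simpa using ENNReal.Tendsto.mul_const (tendsto_eLpNorm_zero_of_tendsto_ae
      (by simpa using hpq.symm.lt.le) ENNReal.ofReal_ne_top
      (fun k => ((φ k).measurable.sub hf).aestronglyMeasurable) (M := 3 * M)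
      (fun k ω => (abs_sub _ _).trans (by linarith [hφM k ω, hM ω]))
      (.of_forall fun ω => by simpa using (hφf ω).sub_const (f ω))) (Or.inr hC)
  refine TendstoUniformly.tendsto_of_eventually_tendsto (p := atTop)
    (F := fun k i => ∫ ω, φ k ω * K i ω ∂μ) ?_ (.of_forall fun k => hsimple (φ k)) ?_
  · refine EMetric.tendstoUniformly_iff.2 fun ε hε => ?_
    filter_upwards [(tendsto_order.1 hφ_sub).2 ε hε] with k hk i
    rw [edist_comm, edist_eq_enorm_sub, ← integral_sub
      ((hKint i).mul_of_abs_le (φ k).aestronglyMeasurable (hφM k))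
      ((hKint i).mul_of_abs_le hf.aestronglyMeasurable hM)]
    simp_rw [← sub_mul]
    calc _ ≤ eLpNorm (⇑(φ k) - f) (.ofReal q) μ * eLpNorm (K i) (.ofReal p) μ :=
          enorm_integral_mul_le hpq ((φ k).measurable.sub hf).aestronglyMeasurable (hK i).1
      _ ≤ eLpNorm (⇑(φ k) - f) (.ofReal q) μ * C := by gcongr; exact hKC i
      _ < ε := hk
  · refine tendsto_integral_of_dominated_convergence (fun ω => 2 * M * |H ω|)
      (fun k => (φ k).aestronglyMeasurable.mul hH.1) (hH.abs.const_mul _)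
      (fun k => .of_forall fun ω => ?_) (.of_forall fun ω => (hφf ω).mul_const _)
    rw [Real.norm_eq_abs, abs_mul]
    gcongr
    exact hφM k ω

/-- The weak limit is the Radon–Nikodym density of the limit measure of `A ↦ ∫_A Kᵢ`. -/
theorem exists_tendstoWeakly_of_nonneg [IsFiniteMeasure μ] {p q : ℝ} (hpq : p.HolderConjugate q)
    (U : Ultrafilter ι) {K : ι → Ω → ℝ} (hK : ∀ i, MemLp (K i) (.ofReal p) μ) (hK0 : ∀ i, 0 ≤ K i)
    {C : ℝ≥0} (hKC : ∀ i, eLpNorm (K i) (.ofReal p) μ ≤ C) :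
    ∃ H, MemLp H (.ofReal p) μ ∧ TendstoWeakly μ K U H := by
  obtain ⟨ν, hνfin, hνμ, hν⟩ := exists_measure_tendsto_setLIntegral_enorm U
    (by simpa using hpq.lt) ENNReal.ofReal_ne_top (fun i => (hK i).1) ENNReal.coe_ne_top hKC
  set H : Ω → ℝ := fun ω => (ν.rnDeriv μ ω).toReal
  have hH : Measurable H := (ν.measurable_rnDeriv μ).ennreal_toReal
  have hHint : Integrable H μ := Measure.integrable_toReal_rnDeriv
  have hset (A : Set Ω) (hA : MeasurableSet A) :
      Tendsto (fun i => ∫ ω in A, K i ω ∂μ) U (𝓝 (∫ ω in A, H ω ∂μ)) := by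
    rw [Measure.setIntegral_toReal_rnDeriv hνμ A, measureReal_def]
    have (i : ι) : ∫ ω in A, K i ω ∂μ = (∫⁻ ω in A, ‖K i ω‖ₑ ∂μ).toReal := by
      rw [← integral_norm_eq_lintegral_enorm (hK i).1.restrict]
      simp_rw [Real.norm_of_nonneg (hK0 i _)]
    simp_rw [this]
    exact (ENNReal.tendsto_toReal (measure_ne_top ν A)).comp (hν A hA)
  have hKH : TendstoWeakly μ K U H := tendstoWeakly_of_simpleFunc hpq hK ENNReal.coe_ne_top hKC
    hHint (tendsto_integral_simpleFunc_mul
      (fun i => (hK i).integrable (by simpa using hpq.lt.le)) hHint hset)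
  refine ⟨H, ⟨hH.aestronglyMeasurable, (eLpNorm_le_of_integral_mul_le hpq hH (C := C)
    (fun _ => ENNReal.toReal_nonneg) hHint fun f hf hfM => ?_).trans_lt ENNReal.coe_lt_top⟩, hKH⟩
  obtain ⟨M, hM⟩ := hfM
  exact le_of_tendsto (hKH f hf ⟨M, hM⟩) (.of_forall fun i => integral_mul_le_of_eLpNorm_le hpq
    (.of_bound hf.aestronglyMeasurable M (.of_forall hM)) (hK i).1 (hKC i))

theorem exists_tendstoWeakly [IsFiniteMeasure μ] {p q : ℝ} (hpq : p.HolderConjugate q)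
    (U : Ultrafilter ι) {K : ι → Ω → ℝ} (hK : ∀ i, MemLp (K i) (.ofReal p) μ) {C : ℝ≥0}
    (hKC : ∀ i, eLpNorm (K i) (.ofReal p) μ ≤ C) :
    ∃ H, MemLp H (.ofReal p) μ ∧ TendstoWeakly μ K U H := by
  have hp1 : 1 ≤ ENNReal.ofReal p := by simpa using hpq.lt.le
  have hK₁ (i : ι) : MemLp (fun ω => max (K i ω) 0) (.ofReal p) μ := (hK i).pos_part
  have hK₂ (i : ι) : MemLp (fun ω => max (-K i ω) 0) (.ofReal p) μ := (hK i).neg_part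
  obtain ⟨H₁, hH₁, h₁⟩ := exists_tendstoWeakly_of_nonneg hpq U hK₁
    (fun i ω => le_max_right _ _) fun i => (eLpNorm_mono fun ω => by
      simp only [Real.norm_eq_abs, abs_of_nonneg (le_max_right (K i ω) 0)]
      exact max_le (le_abs_self _) (abs_nonneg _)).trans (hKC i)
  obtain ⟨H₂, hH₂, h₂⟩ := exists_tendstoWeakly_of_nonneg hpq U hK₂
    (fun i ω => le_max_right _ _) fun i => (eLpNorm_mono fun ω => by
      simp only [Real.norm_eq_abs, abs_of_nonneg (le_max_right (-K i ω) 0)]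
      exact max_le (neg_le_abs _) (abs_nonneg _)).trans (hKC i)
  have hK_eq : K = fun i => (fun ω => max (K i ω) 0) - fun ω => max (-K i ω) 0 := by
    ext i ω
    exact (max_zero_sub_max_neg_zero_eq_self (K i ω)).symm
  exact ⟨H₁ - H₂, hH₁.sub hH₂, hK_eq ▸ h₁.sub h₂ (fun i => (hK₁ i).integrable hp1)
    (fun i => (hK₂ i).integrable hp1) (hH₁.integrable hp1) (hH₂.integrable hp1)⟩

end WeakLimit

section Composition

variable {Ω E : Type*} [MeasurableSpace Ω] {μ : Measure Ω} [TopologicalSpace E] [MeasurableSpace E]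
  [OpensMeasurableSpace E] {φ : E → ℝ} {Y : ℕ → Ω → E} {Y' : Ω → E}

theorem tendsto_integral_comp_mul_of_tendsto_ae (hφ : Continuous φ) {B : ℝ}
    (hB : ∀ x, |φ x| ≤ B) (hY : ∀ n, Measurable (Y n))
    (hlim : ∀ᵐ ω ∂μ, Tendsto (fun n => Y n ω) atTop (𝓝 (Y' ω))) {G : Ω → ℝ}
    (hG : Integrable G μ) :
    Tendsto (fun n => ∫ ω, φ (Y n ω) * G ω ∂μ) atTop (𝓝 (∫ ω, φ (Y' ω) * G ω ∂μ)) := by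
  refine tendsto_integral_of_dominated_convergence (fun ω => B * |G ω|)
    (fun n => ((hφ.measurable.comp (hY n)).aestronglyMeasurable.mul hG.1))
    (hG.abs.const_mul B) (fun n => .of_forall fun ω => ?_) ?_
  · rw [Real.norm_eq_abs, abs_mul]
    exact mul_le_mul_of_nonneg_right (hB _) (abs_nonneg _)
  · filter_upwards [hlim] with ω hω
    exact ((hφ.tendsto _).comp hω).mul_const _

theorem tendsto_integral_comp_mul_sub_zero [IsFiniteMeasure μ] {p q : ℝ}
    (hpq : p.HolderConjugate q) (hφ : Continuous φ) {B : ℝ} (hB : ∀ x, |φ x| ≤ B)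
    (hY : ∀ n, Measurable (Y n)) (hY' : Measurable Y')
    (hlim : ∀ᵐ ω ∂μ, Tendsto (fun n => Y n ω) atTop (𝓝 (Y' ω))) {K : ℕ → Ω → ℝ}
    (hK : ∀ n, MemLp (K n) (.ofReal p) μ) {C : ℝ≥0∞} (hC : C ≠ ∞)
    (hKC : ∀ n, eLpNorm (K n) (.ofReal p) μ ≤ C) :
    Tendsto (fun n => ∫ ω, φ (Y n ω) * K n ω ∂μ - ∫ ω, φ (Y' ω) * K n ω ∂μ) atTop (𝓝 0) := by
  have hφY (n : ℕ) : Measurable fun ω => φ (Y n ω) := hφ.measurable.comp (hY n)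
  have hφY' : Measurable fun ω => φ (Y' ω) := hφ.measurable.comp hY'
  have hdiff (n : ℕ) : Measurable fun ω => φ (Y n ω) - φ (Y' ω) := (hφY n).sub hφY'
  have hdiff_abs (n : ℕ) (ω : Ω) : |φ (Y n ω) - φ (Y' ω)| ≤ 2 * B :=
    (abs_sub _ _).trans (by linarith [hB (Y n ω), hB (Y' ω)])
  refine (tendsto_integral_mul_zero_of_tendsto_ae hpq (fun n => (hdiff n).aestronglyMeasurable)
    hdiff_abs ?_ (fun n => (hK n).1) hC hKC).congr fun n => ?_
  · filter_upwards [hlim] with ω hω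
    simpa using ((hφ.tendsto _).comp hω).sub_const (φ (Y' ω))
  · have hKint : Integrable (K n) μ := (hK n).integrable (by simpa using hpq.lt.le)
    rw [← integral_sub (hKint.mul_of_abs_le (hφY n).aestronglyMeasurable fun ω => hB _)
      (hKint.mul_of_abs_le hφY'.aestronglyMeasurable fun ω => hB _)]
    simp_rw [sub_mul]

end Composition

theorem stmt2_general {Ω : Type*} [MeasurableSpace Ω] (μ : Measure Ω) [IsProbabilityMeasure μ]
    (d : ℕ) (α : Fin d → ℕ) (m : ℕ) (hαm : ∑ i, α i = m)
    (p : ℝ) (hp : 1 < p)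
    (X : ℕ → Ω → EuclideanSpace ℝ (Fin d)) (Xlim : Ω → EuclideanSpace ℝ (Fin d))
    (hXmeas : ∀ n, Measurable (X n)) (hXlimmeas : Measurable Xlim)
    (has : ∀ᵐ ω ∂μ, Tendsto (fun n => X n ω) atTop (𝓝 (Xlim ω)))
    (G : Ω → ℝ) (hGmeas : Measurable G) (CG : ℝ) (hG : ∀ ω, |G ω| ≤ CG)
    (L : ℕ → Ω → ℝ) (hL : ∀ n, MemLp (L n) (ENNReal.ofReal p) μ)
    (C : ℝ) (hC : ∀ n, eLpNorm (L n) (ENNReal.ofReal p) μ ≤ ENNReal.ofReal C)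
    (hibp : ∀ n, ∀ g : EuclideanSpace ℝ (Fin d) → ℝ, CmBounded m g →
      ∫ ω, mderiv α g (X n ω) * G ω ∂μ = ∫ ω, g (X n ω) * L n ω ∂μ) :
    ∃ H : Ω → ℝ, MemLp H (ENNReal.ofReal p) μ ∧
      ∀ g : EuclideanSpace ℝ (Fin d) → ℝ, CmBounded m g →
        ∫ ω, mderiv α g (Xlim ω) * G ω ∂μ = ∫ ω, g (Xlim ω) * H ω ∂μ := by
  have hpq := Real.HolderConjugate.conjExponent hp
  obtain ⟨H, hH, hLH⟩ := exists_tendstoWeakly hpq (.of atTop) hL (C := C.toNNReal) hC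
  refine ⟨H, hH, fun g hg => ?_⟩
  obtain ⟨B, hB⟩ := hg.exists_abs_le
  have hDg : CmBounded 0 (mderiv α g) := CmBounded.mderiv α (by rwa [hαm])
  obtain ⟨B', hB'⟩ := hDg.exists_abs_le
  have hGint : Integrable G μ :=
    (MemLp.of_bound hGmeas.aestronglyMeasurable CG (.of_forall hG)).integrable le_rfl
  have hlim : Tendsto (fun n => ∫ ω, g (Xlim ω) * L n ω ∂μ) atTop
      (𝓝 (∫ ω, mderiv α g (Xlim ω) * G ω ∂μ)) := by
    refine (sub_zero (∫ ω, mderiv α g (Xlim ω) * G ω ∂μ) ▸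
      (tendsto_integral_comp_mul_of_tendsto_ae hDg.continuous hB' hXmeas has hGint).sub
      (tendsto_integral_comp_mul_sub_zero hpq hg.continuous hB hXmeas hXlimmeas has hL
        ENNReal.ofReal_ne_top hC)).congr fun n => ?_
    rw [hibp n g hg, sub_sub_cancel]
  exact tendsto_nhds_unique (hlim.mono_left (Ultrafilter.of_le atTop))
    (hLH _ (hg.continuous.measurable.comp hXlimmeas) ⟨B, fun ω => hB _⟩)

/-- If `Xₙ → X` a.s., `G` is bounded, and for every `n` an integration
by parts formula `E[∂_α g(Xₙ) G] = E[g(Xₙ) Lₙ]` holds for all `g ∈ C^m_b(ℝ^d)` with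
`(Lₙ)` bounded in `L^p`, then there is `H ∈ L^p` with
`E[∂_α g(X) G] = E[g(X) H]` for all `g ∈ C^m_b(ℝ^d)`. -/
theorem stmt2 {Ω : Type*} [MeasurableSpace Ω] (μ : Measure Ω) [IsProbabilityMeasure μ]
    (d : ℕ) (hd : 1 ≤ d) (α : Fin d → ℕ) (m : ℕ) (hαm : ∑ i, α i = m) (hm : 1 ≤ m)
    (p : ℝ) (hp : 1 < p)
    (X : ℕ → Ω → EuclideanSpace ℝ (Fin d)) (Xlim : Ω → EuclideanSpace ℝ (Fin d))
    (hXmeas : ∀ n, Measurable (X n)) (hXlimmeas : Measurable Xlim)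
    (has : ∀ᵐ ω ∂μ, Tendsto (fun n => X n ω) atTop (𝓝 (Xlim ω)))
    (G : Ω → ℝ) (hGmeas : Measurable G) (CG : ℝ) (hG : ∀ ω, |G ω| ≤ CG)
    (L : ℕ → Ω → ℝ) (hL : ∀ n, MemLp (L n) (ENNReal.ofReal p) μ)
    (C : ℝ) (hC : ∀ n, eLpNorm (L n) (ENNReal.ofReal p) μ ≤ ENNReal.ofReal C)
    (hibp : ∀ n, ∀ g : EuclideanSpace ℝ (Fin d) → ℝ, CmBounded m g →
      ∫ ω, mderiv α g (X n ω) * G ω ∂μ = ∫ ω, g (X n ω) * L n ω ∂μ) :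
    ∃ H : Ω → ℝ, MemLp H (ENNReal.ofReal p) μ ∧
      ∀ g : EuclideanSpace ℝ (Fin d) → ℝ, CmBounded m g →
        ∫ ω, mderiv α g (Xlim ω) * G ω ∂μ = ∫ ω, g (Xlim ω) * H ω ∂μ :=
  stmt2_general μ d α m hαm p hp X Xlim hXmeas hXlimmeas has G hGmeas CG hG L hL C hC hibp
end

section
/- Let (Ω, F, P) be a probability space, d ≥ 1, and Q : Ω → M_{d×d}(ℝ) a measurable map whose values are almost surely symmetric positive semidefinite matrices. Suppose there exists c > 0 such that E[exp(−⟨Q(ω)x, x⟩)] ≤ exp(−c|x|^2) for every x ∈ ℝ^d. Then Q(ω) is almost surely positive definite, and for every p ≥ 1/2 one has E[(det Q)^{−p}] ≤ c^{−dp}. -/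
/-!
Substituting `√t • x` for `x` turns the hypothesis into the Laplace-transform bound
`E[exp(-t⟨Qx, x⟩)] ≤ exp(-t c|x|²)` for all `t ≥ 0`. Chernoff's inequality with `t → ∞` then gives
`⟨Qx, x⟩ ≥ c|x|²` almost surely for each fixed `x`, hence, by continuity in `x` and a countable
dense set of `x`, almost surely for all `x` at once. So every eigenvalue of `Q` is at least `c`:
`Q` is positive definite, `det Q ≥ c^d`, and `(det Q)^(-p) ≤ c^(-dp)` holds pointwise.
-/

open MeasureTheory Filter Topology Matrix ProbabilityTheory

section Chernoff

variable {Ω : Type*} [MeasurableSpace Ω] {μ : Measure Ω} [IsFiniteMeasure μ] {f : Ω → ℝ}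

lemma integrable_exp_mul_of_nonpos (hf : AEMeasurable f μ) (hf0 : 0 ≤ᵐ[μ] f) {t : ℝ}
    (ht : t ≤ 0) : Integrable (fun ω => Real.exp (t * f ω)) μ := by
  refine (integrable_const (1 : ℝ)).mono' (hf.const_mul t).exp.aestronglyMeasurable ?_
  filter_upwards [hf0] with ω hω
  rw [Real.norm_of_nonneg (Real.exp_pos _).le, Real.exp_le_one_iff]
  exact mul_nonpos_of_nonpos_of_nonneg ht hω

lemma measure_le_sub_eq_zero_of_mgf_le (hf : AEMeasurable f μ) (hf0 : 0 ≤ᵐ[μ] f) {L : ℝ}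
    (hmgf : ∀ t ≤ 0, mgf f μ t ≤ Real.exp (t * L)) {ε : ℝ} (hε : 0 < ε) :
    μ {ω | f ω ≤ L - ε} = 0 := by
  have hchernoff : ∀ t ≤ 0, μ.real {ω | f ω ≤ L - ε} ≤ Real.exp (t * ε) := fun t ht =>
    calc μ.real {ω | f ω ≤ L - ε}
        ≤ Real.exp (-t * (L - ε)) * mgf f μ t :=
          measure_le_le_exp_mul_mgf _ ht (integrable_exp_mul_of_nonpos hf hf0 ht)
      _ ≤ Real.exp (-t * (L - ε)) * Real.exp (t * L) := by gcongr; exact hmgf t ht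
      _ = Real.exp (t * ε) := by rw [← Real.exp_add]; ring_nf
  have htendsto : Tendsto (fun t => Real.exp (t * ε)) atBot (𝓝 0) :=
    Real.tendsto_exp_atBot.comp (tendsto_id.atBot_mul_const hε)
  have hle : μ.real {ω | f ω ≤ L - ε} ≤ 0 :=
    ge_of_tendsto htendsto ((eventually_le_atBot 0).mono hchernoff)
  exact (measureReal_eq_zero_iff).1 (hle.antisymm measureReal_nonneg)

lemma ae_le_of_mgf_le (hf : AEMeasurable f μ) (hf0 : 0 ≤ᵐ[μ] f) {L : ℝ}
    (hmgf : ∀ t ≤ 0, mgf f μ t ≤ Real.exp (t * L)) : ∀ᵐ ω ∂μ, L ≤ f ω := by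
  have hcover : {ω | ¬L ≤ f ω} ⊆ ⋃ k : ℕ, {ω | f ω ≤ L - 1 / (k + 1)} := fun ω hω => by
    obtain ⟨k, hk⟩ := exists_nat_one_div_lt (sub_pos.2 (not_le.1 hω))
    exact Set.mem_iUnion.2 ⟨k, by simp only [Set.mem_ofPred_eq]; linarith⟩
  exact measure_mono_null hcover <| measure_iUnion_null fun k =>
    measure_le_sub_eq_zero_of_mgf_le hf hf0 hmgf Nat.one_div_pos_of_nat

end Chernoff

lemma Filter.eventually_forall_le_of_continuous {Ω X : Type*} [TopologicalSpace X]
    [TopologicalSpace.SeparableSpace X] {l : Filter Ω} [CountableInterFilter l]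
    {f g : Ω → X → ℝ} (hf : ∀ ω, Continuous (f ω)) (hg : ∀ ω, Continuous (g ω))
    (h : ∀ x, ∀ᶠ ω in l, f ω x ≤ g ω x) : ∀ᶠ ω in l, ∀ x, f ω x ≤ g ω x := by
  obtain ⟨s, hs, hsd⟩ := TopologicalSpace.exists_countable_dense X
  filter_upwards [(eventually_countable_ball hs).2 fun x _ => h x] with ω hω x
  exact closure_minimal hω (isClosed_le (hf ω) (hg ω)) (hsd x)

namespace Matrix

variable {n : Type*} [Fintype n]

lemma mulVec_smul_dotProduct_smul {R : Type*} [CommSemiring R] (A : Matrix n n R) (s : R)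
    (x : n → R) : A *ᵥ (s • x) ⬝ᵥ (s • x) = s ^ 2 * (A *ᵥ x ⬝ᵥ x) := by
  rw [mulVec_smul, smul_dotProduct, dotProduct_smul, smul_eq_mul, smul_eq_mul]
  ring

variable [DecidableEq n] {A : Matrix n n ℝ}

lemma IsHermitian.le_eigenvalues_of_le_dotProduct_mulVec (hA : A.IsHermitian) {c : ℝ}
    (h : ∀ x, c * (x ⬝ᵥ x) ≤ A *ᵥ x ⬝ᵥ x) (i : n) : c ≤ hA.eigenvalues i := by
  set v : n → ℝ := ⇑(hA.eigenvectorBasis i)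
  have hv : v ⬝ᵥ v = 1 := by
    have h1 := real_inner_self_eq_norm_sq (hA.eigenvectorBasis i)
    rw [hA.eigenvectorBasis.orthonormal.1 i, one_pow, EuclideanSpace.inner_eq_star_dotProduct] at h1
    simpa using h1
  have := h v
  rw [hv, mul_one, dotProduct_comm] at this
  simpa [hA.eigenvalues_eq i] using this

lemma IsHermitian.pow_card_le_det (hA : A.IsHermitian) {c : ℝ} (hc : 0 ≤ c)
    (h : ∀ i, c ≤ hA.eigenvalues i) : c ^ Fintype.card n ≤ A.det := by
  rw [hA.det_eq_prod_eigenvalues, ← Finset.card_univ, ← Finset.prod_const]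
  exact Finset.prod_le_prod (fun _ _ => hc) fun i _ => h i

end Matrix

theorem stmt6_general {Ω : Type*} [MeasurableSpace Ω] (μ : Measure Ω) [IsProbabilityMeasure μ]
    (d : ℕ) (Q : Ω → Matrix (Fin d) (Fin d) ℝ) (hQmeas : ∀ i j, Measurable fun ω => Q ω i j)
    (hpsd : ∀ᵐ ω ∂μ, (Q ω).PosSemidef)
    (c : ℝ) (hc : 0 < c)
    (hbound : ∀ x : Fin d → ℝ,
      ∫ ω, Real.exp (-((Q ω).mulVec x ⬝ᵥ x)) ∂μ ≤ Real.exp (-c * ∑ i, x i ^ 2)) :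
    (∀ᵐ ω ∂μ, (Q ω).PosDef) ∧
      ∀ p : ℝ, 1 / 2 ≤ p →
        ∫⁻ ω, ENNReal.ofReal ((Q ω).det ^ (-p)) ∂μ
          ≤ ENNReal.ofReal (c ^ (-(d : ℝ) * p)) := by
  have hmgf (x : Fin d → ℝ) (t : ℝ) (ht : t ≤ 0) :
      mgf (fun ω => Q ω *ᵥ x ⬝ᵥ x) μ t ≤ Real.exp (t * (c * (x ⬝ᵥ x))) := by
    have hs : √(-t) ^ 2 = -t := Real.sq_sqrt (neg_nonneg.2 ht)
    convert hbound (√(-t) • x) using 1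
    · simp only [mgf, mulVec_smul_dotProduct_smul, hs, neg_mul, neg_neg]
    · simp only [Pi.smul_apply, smul_eq_mul, mul_pow, hs, ← Finset.mul_sum, dotProduct, ← sq]
      ring_nf
  have hquad (x : Fin d → ℝ) : ∀ᵐ ω ∂μ, c * (x ⬝ᵥ x) ≤ Q ω *ᵥ x ⬝ᵥ x := by
    refine ae_le_of_mgf_le ?_ ?_ (hmgf x)
    · simp only [mulVec, dotProduct]
      fun_prop
    · filter_upwards [hpsd] with ω hω
      simpa [dotProduct_comm] using hω.dotProduct_mulVec_nonneg x
  have hlow : ∀ᵐ ω ∂μ, ∀ x, c * (x ⬝ᵥ x) ≤ Q ω *ᵥ x ⬝ᵥ x :=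
    eventually_forall_le_of_continuous (by fun_prop) (by fun_prop) hquad
  have heig : ∀ᵐ ω ∂μ, ∃ hQ : (Q ω).IsHermitian, ∀ i, c ≤ hQ.eigenvalues i := by
    filter_upwards [hpsd, hlow] with ω hω hωlow
    exact ⟨hω.1, hω.1.le_eigenvalues_of_le_dotProduct_mulVec hωlow⟩
  refine ⟨?_, fun p hp => ?_⟩
  · filter_upwards [heig] with ω ⟨hQ, hωeig⟩
    exact hQ.posDef_iff_eigenvalues_pos.2 fun i => hc.trans_le (hωeig i)
  · have hdet : ∀ᵐ ω ∂μ, (Q ω).det ^ (-p) ≤ c ^ (-(d : ℝ) * p) := by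
      filter_upwards [heig] with ω ⟨hQ, hωeig⟩
      have hcd : c ^ d ≤ (Q ω).det := by simpa using hQ.pow_card_le_det hc.le hωeig
      calc (Q ω).det ^ (-p) ≤ ((c ^ d : ℝ)) ^ (-p) :=
            Real.rpow_le_rpow_of_nonpos (by positivity) hcd (by linarith)
        _ = c ^ (-(d : ℝ) * p) := by
            rw [← Real.rpow_natCast, ← Real.rpow_mul hc.le, neg_mul_comm]
    calc ∫⁻ ω, ENNReal.ofReal ((Q ω).det ^ (-p)) ∂μ
        ≤ ∫⁻ _, ENNReal.ofReal (c ^ (-(d : ℝ) * p)) ∂μ :=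
          lintegral_mono_ae (hdet.mono fun _ h => ENNReal.ofReal_le_ofReal h)
      _ = ENNReal.ofReal (c ^ (-(d : ℝ) * p)) := by simp

/-- Let `Q` be a random `d×d` matrix, a.s. symmetric positive
semidefinite, such that `E[exp(−⟨Qx, x⟩)] ≤ exp(−c|x|²)` for every `x ∈ ℝ^d` and some
`c > 0`. Then `Q` is a.s. positive definite and `E[(det Q)^{−p}] ≤ c^{−dp}` for every
`p ≥ 1/2`. -/
theorem stmt6 {Ω : Type*} [MeasurableSpace Ω] (μ : Measure Ω) [IsProbabilityMeasure μ]
    (d : ℕ) (hd : 1 ≤ d) (Q : Ω → Matrix (Fin d) (Fin d) ℝ) (hQmeas : ∀ i j, Measurable fun ω => Q ω i j)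
    (hpsd : ∀ᵐ ω ∂μ, (Q ω).PosSemidef)
    (c : ℝ) (hc : 0 < c)
    (hbound : ∀ x : Fin d → ℝ,
      ∫ ω, Real.exp (-((Q ω).mulVec x ⬝ᵥ x)) ∂μ ≤ Real.exp (-c * ∑ i, x i ^ 2)) :
    (∀ᵐ ω ∂μ, (Q ω).PosDef) ∧
      ∀ p : ℝ, 1 / 2 ≤ p →
        ∫⁻ ω, ENNReal.ofReal ((Q ω).det ^ (-p)) ∂μ
          ≤ ENNReal.ofReal (c ^ (-(d : ℝ) * p)) :=
  stmt6_general μ d Q hQmeas hpsd c hc hbound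
end
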